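/- Let S be an injective unilateral weighted shift with non-negative bounded weights and positive weights (none zero). The quasi-nilpotent part H₀(S) = {x : lim ‖Sⁿx‖^{1/n} = 0} is dense in H if and only if r₃(S) = limsup (ω_0⋯ω_{n-1})^{1/n} = 0; moreover, S has property (Q) (i.e., H₀(S−λ) is closed for every λ ∈ ℂ) if and only if either S is quasi-nilpotent or r₃(S) > 0. -/

import Mathlib

open Filter

section Defs

variable {X : Type*} [NormedAddCommGroup X] [NormedSpace ℂ X]

/-- The quasi-nilpotent part of an operator `T`:
`H₀(T) = {x : lim ‖Tⁿ x‖^(1/n) = 0}`. -/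
def quasiNilpotentPart (T : X →L[ℂ] X) : Set X :=
  {x : X | Tendsto (fun n : ℕ => ‖(T ^ n) x‖ ^ ((n : ℝ)⁻¹)) atTop (nhds 0)}

/-- Property (Q): the quasi-nilpotent part of `T - λ` is closed for every `λ`. -/
def PropertyQ (T : X →L[ℂ] X) : Prop :=
  ∀ μ : ℂ, IsClosed (quasiNilpotentPart (T - μ • (1 : X →L[ℂ] X)))

end Defs

/-!
Write `β n = ω 0 ⋯ ω (n-1) = ‖Sⁿ e₀‖`. The quasi-nilpotent part `H₀(T)` is a subspace with
`Tᵏ x ∈ H₀(T) ↔ x ∈ H₀(T)`; since `Sᵏ e₀ = β k • e_k`, either all basis vectors lie in `H₀(S)`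
(exactly when `r₃(S) = 0`, and then `H₀(S)` is dense) or none does, and then `H₀(S) = {0}`:
a non-zero `x` has a coordinate `⟪e_k, x⟫ ≠ 0`, and `|⟪e_k, x⟫| ‖Sⁿ e_k‖ ≤ ‖Sⁿ x‖` would put
`e_k` into `H₀(S)`. For `μ ≠ 0`, `S - μ` multiplies the lowest non-zero coordinate by `-μ`, so
`H₀(S - μ) = {0}`. Property (Q) thus reduces to closedness of `H₀(S)`, which for dense `H₀(S)`
means `H₀(S) = H`; by Banach–Steinhaus and Gelfand's formula this says that `S` is
quasi-nilpotent.
-/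

open Topology Finset
open scoped InnerProductSpace

section RootTest

variable {u v : ℕ → ℝ}

theorem tendsto_rpow_inv_zero_iff (hu : ∀ n, 0 ≤ u n) :
    Tendsto (fun n : ℕ => u n ^ (n : ℝ)⁻¹) atTop (𝓝 0) ↔
      ∀ c > 0, ∃ C, ∀ᶠ n in atTop, u n ≤ C * c ^ n := by
  constructor
  · intro h c hc
    refine ⟨1, ?_⟩
    filter_upwards [h.eventually_le_const hc, eventually_ne_atTop 0] with n hn hn0
    rw [one_mul, ← Real.rpow_inv_natCast_pow (hu n) hn0]
    exact pow_le_pow_left₀ (Real.rpow_nonneg (hu n) _) hn n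
  · intro h
    refine tendsto_order.2
      ⟨fun a ha => Eventually.of_forall fun n => ha.trans_le (Real.rpow_nonneg (hu n) _),
        fun ε hε => ?_⟩
    obtain ⟨C, hC⟩ := h (ε / 2) (by positivity)
    have hC2 : ∀ᶠ n : ℕ in atTop, C < 2 ^ n :=
      (tendsto_pow_atTop_atTop_of_one_lt one_lt_two).eventually_gt_atTop C
    filter_upwards [hC, hC2, eventually_ne_atTop 0] with n hn h2n hn0
    have hlt : u n < ε ^ n :=
      calc u n ≤ C * (ε / 2) ^ n := hn
        _ < 2 ^ n * (ε / 2) ^ n := by gcongr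
        _ = ε ^ n := by rw [← mul_pow, mul_div_cancel₀ ε two_ne_zero]
    calc u n ^ (n : ℝ)⁻¹ < (ε ^ n) ^ (n : ℝ)⁻¹ :=
          Real.rpow_lt_rpow (hu n) hlt (inv_pos.2 (Nat.cast_pos.2 (Nat.pos_of_ne_zero hn0)))
      _ = ε := Real.pow_rpow_inv_natCast hε.le hn0

theorem tendsto_rpow_inv_zero_of_le_mul {C : ℝ} (hC : 0 ≤ C) (hu : ∀ n, 0 ≤ u n)
    (hv : ∀ n, 0 ≤ v n) (huv : ∀ n, u n ≤ C * v n)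
    (h : Tendsto (fun n : ℕ => v n ^ (n : ℝ)⁻¹) atTop (𝓝 0)) :
    Tendsto (fun n : ℕ => u n ^ (n : ℝ)⁻¹) atTop (𝓝 0) := by
  rw [tendsto_rpow_inv_zero_iff hv] at h
  rw [tendsto_rpow_inv_zero_iff hu]
  intro c hc
  obtain ⟨D, hD⟩ := h c hc
  exact ⟨C * D, hD.mono fun n hn => (huv n).trans (by rw [mul_assoc]; gcongr)⟩

theorem limsup_nonneg_of_nonneg (hu : ∀ n, 0 ≤ u n) (hb : IsBoundedUnder (· ≤ ·) atTop u) :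
    0 ≤ limsup u atTop :=
  le_limsup_of_frequently_le (Frequently.of_forall hu) hb

theorem limsup_eq_zero_iff_tendsto (hu : ∀ n, 0 ≤ u n) (hb : IsBoundedUnder (· ≤ ·) atTop u) :
    limsup u atTop = 0 ↔ Tendsto u atTop (𝓝 0) :=
  ⟨fun h => tendsto_of_le_liminf_of_limsup_le
      (le_liminf_of_le hb.isCoboundedUnder_ge (Eventually.of_forall hu)) h.le hb
      (isBoundedUnder_of ⟨0, hu⟩),
    Tendsto.limsup_eq⟩

end RootTest

section QuasiNilpotentPart

variable {X : Type*} [NormedAddCommGroup X] [NormedSpace ℂ X] (T : X →L[ℂ] X)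

theorem mem_quasiNilpotentPart_iff {x : X} :
    x ∈ quasiNilpotentPart T ↔ ∀ c > 0, ∃ C, ∀ᶠ n in atTop, ‖(T ^ n) x‖ ≤ C * c ^ n :=
  tendsto_rpow_inv_zero_iff fun _ => norm_nonneg _

def quasiNilpotentSubmodule : Submodule ℂ X where
  carrier := quasiNilpotentPart T
  zero_mem' := (mem_quasiNilpotentPart_iff T).2 fun _ _ => ⟨0, by simp⟩
  add_mem' := by
    intro x y hx hy
    rw [mem_quasiNilpotentPart_iff] at hx hy ⊢
    intro c hc
    obtain ⟨C, hC⟩ := hx c hc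
    obtain ⟨D, hD⟩ := hy c hc
    refine ⟨C + D, ?_⟩
    filter_upwards [hC, hD] with n hCn hDn
    calc ‖(T ^ n) (x + y)‖ ≤ ‖(T ^ n) x‖ + ‖(T ^ n) y‖ := by rw [map_add]; exact norm_add_le _ _
      _ ≤ (C + D) * c ^ n := by rw [add_mul]; exact add_le_add hCn hDn
  smul_mem' := by
    intro a x hx
    rw [mem_quasiNilpotentPart_iff] at hx ⊢
    intro c hc
    obtain ⟨C, hC⟩ := hx c hc
    refine ⟨‖a‖ * C, hC.mono fun n hn => ?_⟩
    rw [map_smul, norm_smul, mul_assoc]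
    gcongr

@[simp]
theorem mem_quasiNilpotentSubmodule {x : X} :
    x ∈ quasiNilpotentSubmodule T ↔ x ∈ quasiNilpotentPart T :=
  Iff.rfl

theorem pow_apply_mem_quasiNilpotentPart_iff (k : ℕ) {x : X} :
    (T ^ k) x ∈ quasiNilpotentPart T ↔ x ∈ quasiNilpotentPart T := by
  have hpow : ∀ n, (T ^ n) ((T ^ k) x) = (T ^ (n + k)) x := fun n => by
    rw [pow_add, mul_apply_eq_comp]
  simp only [mem_quasiNilpotentPart_iff, hpow]
  constructor
  · intro h c hc
    obtain ⟨C, hC⟩ := h c hc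
    refine ⟨C / c ^ k, ?_⟩
    rw [← map_add_atTop_eq_nat k, eventually_map]
    filter_upwards [hC] with n hn
    rwa [pow_add c, mul_comm (c ^ n), ← mul_assoc, div_mul_cancel₀ _ (by positivity)]
  · intro h c hc
    obtain ⟨C, hC⟩ := h c hc
    refine ⟨C * c ^ k, ?_⟩
    filter_upwards [(tendsto_add_atTop_nat k).eventually hC] with n hn
    rwa [pow_add c, mul_comm (c ^ n), ← mul_assoc] at hn

theorem isBoundedUnder_norm_pow_apply_rpow_inv {x : X} (hx : ‖x‖ ≤ 1) :
    IsBoundedUnder (· ≤ ·) atTop fun n : ℕ => ‖(T ^ n) x‖ ^ (n : ℝ)⁻¹ := by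
  refine isBoundedUnder_of_eventually_le (a := ‖T‖) ?_
  filter_upwards [eventually_ne_atTop 0] with n hn
  have hTn : ‖(T ^ n) x‖ ≤ ‖T‖ ^ n :=
    calc ‖(T ^ n) x‖ ≤ ‖T ^ n‖ * 1 := (T ^ n).le_opNorm_of_le hx
      _ ≤ ‖T‖ ^ n := by rw [mul_one]; exact norm_pow_le' T (Nat.pos_of_ne_zero hn)
  calc ‖(T ^ n) x‖ ^ (n : ℝ)⁻¹ ≤ (‖T‖ ^ n) ^ (n : ℝ)⁻¹ :=
        Real.rpow_le_rpow (norm_nonneg _) hTn (by positivity)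
    _ = ‖T‖ := Real.pow_rpow_inv_natCast (norm_nonneg T) hn

end QuasiNilpotentPart

section Spectrum

variable {A : Type*} [NormedRing A] [NormedAlgebra ℂ A] [CompleteSpace A]

theorem spectralRadius_eq_zero_iff_tendsto (a : A) :
    spectralRadius ℂ a = 0 ↔ Tendsto (fun n : ℕ => ‖a ^ n‖ ^ (n : ℝ)⁻¹) atTop (𝓝 0) := by
  have hgelfand := spectrum.pow_nnnorm_pow_one_div_tendsto_nhds_spectralRadius a
  simp only [one_div, ← ENNReal.coe_rpow_of_nonneg _ (inv_nonneg.2 (Nat.cast_nonneg _))]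
    at hgelfand
  constructor
  · intro h
    rw [h, ← ENNReal.coe_zero, ENNReal.tendsto_coe, ← NNReal.tendsto_coe] at hgelfand
    simpa using hgelfand
  · intro h
    refine tendsto_nhds_unique hgelfand ?_
    rw [← ENNReal.coe_zero, ENNReal.tendsto_coe, ← NNReal.tendsto_coe]
    simpa using h

theorem spectrum_eq_singleton_zero_iff [Nontrivial A] (a : A) :
    spectrum ℂ a = {0} ↔ spectralRadius ℂ a = 0 := by
  rw [← (spectrum.nonempty a).subset_singleton_iff]
  simp only [spectralRadius, ENNReal.iSup_eq_zero, ENNReal.coe_eq_zero, nnnorm_eq_zero,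
    Set.subset_def, Set.mem_singleton_iff]

end Spectrum

section Banach

variable {X : Type*} [NormedAddCommGroup X] [NormedSpace ℂ X] [CompleteSpace X] (T : X →L[ℂ] X)

theorem tendsto_norm_pow_rpow_inv_of_quasiNilpotentPart_eq_univ
    (h : quasiNilpotentPart T = Set.univ) :
    Tendsto (fun n : ℕ => ‖T ^ n‖ ^ (n : ℝ)⁻¹) atTop (𝓝 0) := by
  rw [tendsto_rpow_inv_zero_iff fun _ => norm_nonneg _]
  intro c hc
  have hnorm : ∀ n : ℕ, ‖(c : ℂ)⁻¹ ^ n‖ = (c ^ n)⁻¹ := fun n => by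
    rw [norm_pow, norm_inv, Complex.norm_real, Real.norm_of_nonneg hc.le, inv_pow]
  have hpointwise : ∀ x, ∃ C, ∀ n, ‖((c : ℂ)⁻¹ ^ n • T ^ n) x‖ ≤ C := by
    intro x
    obtain ⟨C, hC⟩ := (mem_quasiNilpotentPart_iff T).1 (h ▸ Set.mem_univ x) c hc
    have hbdd : IsBoundedUnder (· ≤ ·) atTop fun n => ‖((c : ℂ)⁻¹ ^ n • T ^ n) x‖ :=
      isBoundedUnder_of_eventually_le (a := C) <| hC.mono fun n hn => by
        rwa [smul_apply, norm_smul, hnorm, inv_mul_le_iff₀ (by positivity), mul_comm]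
    obtain ⟨D, hD⟩ := hbdd.bddAbove_range
    exact ⟨D, fun n => hD ⟨n, rfl⟩⟩
  obtain ⟨C, hC⟩ := banach_steinhaus hpointwise
  refine ⟨C, Eventually.of_forall fun n => ?_⟩
  have hCn := hC n
  rwa [norm_smul, hnorm, inv_mul_le_iff₀ (by positivity), mul_comm] at hCn

theorem quasiNilpotentPart_eq_univ_iff [Nontrivial X] :
    quasiNilpotentPart T = Set.univ ↔ spectrum ℂ T = {0} := by
  rw [spectrum_eq_singleton_zero_iff, spectralRadius_eq_zero_iff_tendsto]
  refine ⟨tendsto_norm_pow_rpow_inv_of_quasiNilpotentPart_eq_univ T,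
    fun h => Set.eq_univ_of_forall fun x => ?_⟩
  exact tendsto_rpow_inv_zero_of_le_mul (norm_nonneg x) (fun _ => norm_nonneg _)
    (fun _ => norm_nonneg _) (fun n => by rw [mul_comm]; exact (T ^ n).le_opNorm x) h

end Banach

section HilbertBasis

variable {ι 𝕜 E : Type*} [RCLike 𝕜] [NormedAddCommGroup E] [InnerProductSpace 𝕜 E]
  (b : HilbertBasis ι 𝕜 E)

theorem HilbertBasis.dense_span_range : Dense (Submodule.span 𝕜 (Set.range b) : Set E) :=
  Submodule.dense_iff_topologicalClosure_eq_top.2 b.dense_span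

theorem HilbertBasis.ext_continuousLinearMap {F : Type*} [TopologicalSpace F] [AddCommMonoid F]
    [Module 𝕜 F] [T2Space F] {f g : E →L[𝕜] F} (h : ∀ i, f (b i) = g (b i)) : f = g :=
  ContinuousLinearMap.ext_on b.dense_span_range (by rintro _ ⟨i, rfl⟩; exact h i)

theorem HilbertBasis.norm_inner_le_norm (i : ι) (x : E) : ‖⟪b i, x⟫_𝕜‖ ≤ ‖x‖ :=
  (_root_.norm_inner_le_norm _ _).trans_eq (by rw [b.orthonormal.1 i, one_mul])

theorem HilbertBasis.exists_inner_ne_zero {x : E} (hx : x ≠ 0) : ∃ i, ⟪b i, x⟫_𝕜 ≠ 0 := by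
  by_contra! h
  refine hx ((b.hasSum_repr x).unique ?_)
  simp [b.repr_apply_apply, h, hasSum_zero]

end HilbertBasis

section WeightedShift

variable {H : Type*} [NormedAddCommGroup H] [InnerProductSpace ℂ H]
  {S : H →L[ℂ] H} {e : HilbertBasis ℕ ℂ H} {ω : ℕ → ℝ}

theorem shift_pow_apply_basis (hS : ∀ n, S (e n) = (ω n : ℂ) • e (n + 1)) (n k : ℕ) :
    (S ^ n) (e k) = ((∏ i ∈ range n, ω (k + i) : ℝ) : ℂ) • e (k + n) := by
  induction n with
  | zero => simp
  | succ n ih =>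
    rw [pow_succ', mul_apply_eq_comp, ih, map_smul, hS, smul_smul, prod_range_succ, ← add_assoc]
    push_cast
    rfl

theorem norm_shift_pow_apply_basis (hpos : ∀ n, 0 < ω n)
    (hS : ∀ n, S (e n) = (ω n : ℂ) • e (n + 1)) (n k : ℕ) :
    ‖(S ^ n) (e k)‖ = ∏ i ∈ range n, ω (k + i) := by
  rw [shift_pow_apply_basis hS, norm_smul, e.orthonormal.1, mul_one, Complex.norm_real,
    Real.norm_of_nonneg (prod_nonneg fun i _ => (hpos _).le)]

theorem inner_basis_zero_shift (hS : ∀ n, S (e n) = (ω n : ℂ) • e (n + 1)) (y : H) :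
    ⟪e 0, S y⟫_ℂ = 0 := by
  have h : (innerSL ℂ (e 0)).comp S = 0 := e.ext_continuousLinearMap fun m => by
    simp [hS, orthonormal_iff_ite.1 e.orthonormal]
  simpa using congr($h y)

theorem inner_basis_succ_shift (hS : ∀ n, S (e n) = (ω n : ℂ) • e (n + 1)) (j : ℕ) (y : H) :
    ⟪e (j + 1), S y⟫_ℂ = ω j * ⟪e j, y⟫_ℂ := by
  have h : (innerSL ℂ (e (j + 1))).comp S = (ω j : ℂ) • innerSL ℂ (e j) :=
    e.ext_continuousLinearMap fun m => by
      rcases eq_or_ne j m with rfl | hjm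
      · simp [hS, e.orthonormal.1]
      · simp [hS, orthonormal_iff_ite.1 e.orthonormal, hjm]
  simpa using congr($h y)

theorem inner_basis_add_shift_pow (hS : ∀ n, S (e n) = (ω n : ℂ) • e (n + 1)) (k n : ℕ) (y : H) :
    ⟪e (k + n), (S ^ n) y⟫_ℂ = (∏ i ∈ range n, ω (k + i) : ℝ) * ⟪e k, y⟫_ℂ := by
  induction n with
  | zero => simp
  | succ n ih =>
    rw [pow_succ', mul_apply_eq_comp, ← add_assoc, inner_basis_succ_shift hS, ih, prod_range_succ]
    push_cast
    ring

theorem inner_basis_shift_sub_smul_of_le (hS : ∀ n, S (e n) = (ω n : ℂ) • e (n + 1)) (μ : ℂ)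
    {k j : ℕ} {y : H} (hy : ∀ i < k, ⟪e i, y⟫_ℂ = 0) (hj : j ≤ k) :
    ⟪e j, (S - μ • 1) y⟫_ℂ = -μ * ⟪e j, y⟫_ℂ := by
  have hSy : ⟪e j, S y⟫_ℂ = 0 := by
    cases j with
    | zero => exact inner_basis_zero_shift hS y
    | succ i => rw [inner_basis_succ_shift hS, hy i hj, mul_zero]
  simp [hSy]

theorem inner_basis_shift_sub_smul_pow (hS : ∀ n, S (e n) = (ω n : ℂ) • e (n + 1)) (μ : ℂ)
    {k : ℕ} {x : H} (hx : ∀ i < k, ⟪e i, x⟫_ℂ = 0) (n : ℕ) {j : ℕ} (hj : j ≤ k) :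
    ⟪e j, ((S - μ • 1) ^ n) x⟫_ℂ = (-μ) ^ n * ⟪e j, x⟫_ℂ := by
  induction n generalizing j with
  | zero => simp
  | succ n ih =>
    have hlow : ∀ i < k, ⟪e i, ((S - μ • 1) ^ n) x⟫_ℂ = 0 := fun i hi => by
      rw [ih hi.le, hx i hi, mul_zero]
    rw [pow_succ', mul_apply_eq_comp, inner_basis_shift_sub_smul_of_le hS μ hlow hj, ih hj]
    ring

theorem quasiNilpotentPart_shift_sub_smul (hS : ∀ n, S (e n) = (ω n : ℂ) • e (n + 1)) {μ : ℂ}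
    (hμ : μ ≠ 0) : quasiNilpotentPart (S - μ • 1) = {0} := by
  classical
  refine Set.eq_singleton_iff_unique_mem.2 ⟨(quasiNilpotentSubmodule _).zero_mem, fun x hx => ?_⟩
  by_contra hx0
  have hex := e.exists_inner_ne_zero hx0
  set k := Nat.find hex
  have hk : ⟪e k, x⟫_ℂ ≠ 0 := Nat.find_spec hex
  have hlow : ∀ i < k, ⟪e i, x⟫_ℂ = 0 := fun i hi => not_not.1 (Nat.find_min hex hi)
  have hbound : ∀ n, ‖μ‖ ^ n ≤ ‖⟪e k, x⟫_ℂ‖⁻¹ * ‖((S - μ • 1) ^ n) x‖ := fun n => by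
    rw [le_inv_mul_iff₀ (norm_pos_iff.2 hk)]
    calc ‖⟪e k, x⟫_ℂ‖ * ‖μ‖ ^ n = ‖⟪e k, ((S - μ • 1) ^ n) x⟫_ℂ‖ := by
          rw [inner_basis_shift_sub_smul_pow hS μ hlow n le_rfl, norm_mul, norm_pow, norm_neg,
            mul_comm]
      _ ≤ ‖((S - μ • 1) ^ n) x‖ := e.norm_inner_le_norm k _
  have hlim := tendsto_rpow_inv_zero_of_le_mul (inv_nonneg.2 (norm_nonneg _))
    (fun n => by positivity) (fun _ => norm_nonneg _) hbound hx
  have hconst : Tendsto (fun n : ℕ => (‖μ‖ ^ n) ^ (n : ℝ)⁻¹) atTop (𝓝 ‖μ‖) :=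
    tendsto_const_nhds.congr' <| (eventually_ne_atTop 0).mono fun n hn =>
      (Real.pow_rpow_inv_natCast (norm_nonneg μ) hn).symm
  exact hμ (norm_eq_zero.1 (tendsto_nhds_unique hconst hlim))

theorem basis_mem_quasiNilpotentPart_shift_iff (hpos : ∀ n, 0 < ω n)
    (hS : ∀ n, S (e n) = (ω n : ℂ) • e (n + 1)) (k : ℕ) :
    e k ∈ quasiNilpotentPart S ↔ e 0 ∈ quasiNilpotentPart S := by
  rw [← pow_apply_mem_quasiNilpotentPart_iff S k (x := e 0), shift_pow_apply_basis hS, zero_add,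
    ← mem_quasiNilpotentSubmodule, ← mem_quasiNilpotentSubmodule, Submodule.smul_mem_iff]
  exact_mod_cast (prod_pos fun i _ => hpos _).ne'

theorem basis_mem_quasiNilpotentPart_shift_of_inner_ne_zero (hpos : ∀ n, 0 < ω n)
    (hS : ∀ n, S (e n) = (ω n : ℂ) • e (n + 1)) {x : H} (hx : x ∈ quasiNilpotentPart S) {k : ℕ}
    (hk : ⟪e k, x⟫_ℂ ≠ 0) : e k ∈ quasiNilpotentPart S := by
  refine tendsto_rpow_inv_zero_of_le_mul (inv_nonneg.2 (norm_nonneg ⟪e k, x⟫_ℂ))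
    (fun _ => norm_nonneg _) (fun _ => norm_nonneg _) (fun n => ?_) hx
  rw [le_inv_mul_iff₀ (norm_pos_iff.2 hk), norm_shift_pow_apply_basis hpos hS]
  calc ‖⟪e k, x⟫_ℂ‖ * ∏ i ∈ range n, ω (k + i) = ‖⟪e (k + n), (S ^ n) x⟫_ℂ‖ := by
        rw [inner_basis_add_shift_pow hS, norm_mul, Complex.norm_real,
          Real.norm_of_nonneg (prod_nonneg fun i _ => (hpos _).le), mul_comm]
    _ ≤ ‖(S ^ n) x‖ := e.norm_inner_le_norm _ _

theorem quasiNilpotentPart_shift_eq_singleton_zero (hpos : ∀ n, 0 < ω n)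
    (hS : ∀ n, S (e n) = (ω n : ℂ) • e (n + 1)) (h0 : e 0 ∉ quasiNilpotentPart S) :
    quasiNilpotentPart S = {0} := by
  refine Set.eq_singleton_iff_unique_mem.2 ⟨(quasiNilpotentSubmodule S).zero_mem, fun x hx => ?_⟩
  by_contra hx0
  obtain ⟨k, hk⟩ := e.exists_inner_ne_zero hx0
  exact h0 ((basis_mem_quasiNilpotentPart_shift_iff hpos hS k).1
    (basis_mem_quasiNilpotentPart_shift_of_inner_ne_zero hpos hS hx hk))

theorem dense_quasiNilpotentPart_shift (hpos : ∀ n, 0 < ω n)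
    (hS : ∀ n, S (e n) = (ω n : ℂ) • e (n + 1)) (h0 : e 0 ∈ quasiNilpotentPart S) :
    Dense (quasiNilpotentPart S) :=
  e.dense_span_range.mono <| (Submodule.span_le (p := quasiNilpotentSubmodule S)).2 <| by
    rintro _ ⟨k, rfl⟩
    exact (basis_mem_quasiNilpotentPart_shift_iff hpos hS k).2 h0

theorem dense_quasiNilpotentPart_shift_iff (hpos : ∀ n, 0 < ω n)
    (hS : ∀ n, S (e n) = (ω n : ℂ) • e (n + 1)) :
    Dense (quasiNilpotentPart S) ↔ e 0 ∈ quasiNilpotentPart S := by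
  refine ⟨fun hd => ?_, dense_quasiNilpotentPart_shift hpos hS⟩
  by_contra h0
  rw [quasiNilpotentPart_shift_eq_singleton_zero hpos hS h0] at hd
  exact e.orthonormal.ne_zero 0 (by simpa using hd (e 0))

theorem propertyQ_shift_iff [CompleteSpace H] (hpos : ∀ n, 0 < ω n)
    (hS : ∀ n, S (e n) = (ω n : ℂ) • e (n + 1)) :
    PropertyQ S ↔ spectrum ℂ S = {0} ∨ e 0 ∉ quasiNilpotentPart S := by
  have : Nontrivial H := ⟨⟨e 0, 0, e.orthonormal.ne_zero 0⟩⟩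
  have hS0 : S - (0 : ℂ) • 1 = S := by simp
  have hQ : PropertyQ S ↔ IsClosed (quasiNilpotentPart S) :=
    ⟨fun h => hS0 ▸ h 0, fun h μ => by
      rcases eq_or_ne μ 0 with rfl | hμ
      · rwa [hS0]
      · rw [quasiNilpotentPart_shift_sub_smul hS hμ]
        exact isClosed_singleton⟩
  rw [hQ, ← quasiNilpotentPart_eq_univ_iff]
  by_cases h0 : e 0 ∈ quasiNilpotentPart S
  · have hd := dense_quasiNilpotentPart_shift hpos hS h0
    simp only [h0, not_true_eq_false, or_false]
    exact ⟨fun hc => by rw [← hc.closure_eq, hd.closure_eq], fun h => h ▸ isClosed_univ⟩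
  · simp only [h0, not_false_eq_true, or_true, iff_true]
    rw [quasiNilpotentPart_shift_eq_singleton_zero hpos hS h0]
    exact isClosed_singleton

end WeightedShift

variable {H : Type*} [NormedAddCommGroup H] [InnerProductSpace ℂ H] [CompleteSpace H]

theorem quasiNilpotentPart_dense_and_propertyQ_general (S : H →L[ℂ] H)
    (e : HilbertBasis ℕ ℂ H) (ω : ℕ → ℝ) (hpos : ∀ n, 0 < ω n)
    (hS : ∀ n, S (e n) = (ω n : ℂ) • e (n + 1)) :
    (Dense (quasiNilpotentPart S) ↔
      (atTop.limsup fun n : ℕ => (∏ i ∈ Finset.range n, ω i) ^ ((n : ℝ)⁻¹)) = 0) ∧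
    (PropertyQ S ↔
      (spectrum ℂ S = {0} ∨
        0 < atTop.limsup fun n : ℕ => (∏ i ∈ Finset.range n, ω i) ^ ((n : ℝ)⁻¹))) := by
  have hr : (fun n : ℕ => (∏ i ∈ Finset.range n, ω i) ^ ((n : ℝ)⁻¹)) =
      fun n : ℕ => ‖(S ^ n) (e 0)‖ ^ (n : ℝ)⁻¹ := by
    simp only [norm_shift_pow_apply_basis hpos hS, zero_add]
  have hbdd := isBoundedUnder_norm_pow_apply_rpow_inv S (e.orthonormal.1 0).le
  have hnonneg : ∀ n : ℕ, 0 ≤ ‖(S ^ n) (e 0)‖ ^ (n : ℝ)⁻¹ := fun n => by positivity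
  rw [hr, (limsup_nonneg_of_nonneg hnonneg hbdd).lt_iff_ne', Ne,
    limsup_eq_zero_iff_tendsto hnonneg hbdd]
  exact ⟨dense_quasiNilpotentPart_shift_iff hpos hS, propertyQ_shift_iff hpos hS⟩

/-- For an injective unilateral weighted shift `S` with positive bounded weights:
the quasi-nilpotent part `H₀(S)` is dense iff `r₃(S) = limsup (ω 0 ⋯ ω (n-1))^(1/n) = 0`;
and `S` has property (Q) iff either `S` is quasi-nilpotent or `r₃(S) > 0`. -/
theorem quasiNilpotentPart_dense_and_propertyQ (S : H →L[ℂ] H)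
    (e : HilbertBasis ℕ ℂ H) (ω : ℕ → ℝ) (hpos : ∀ n, 0 < ω n)
    (hbd : ∃ M : ℝ, ∀ n, ω n ≤ M)
    (hS : ∀ n, S (e n) = (ω n : ℂ) • e (n + 1)) :
    (Dense (quasiNilpotentPart S) ↔
      (atTop.limsup fun n : ℕ => (∏ i ∈ Finset.range n, ω i) ^ ((n : ℝ)⁻¹)) = 0) ∧
    (PropertyQ S ↔
      (spectrum ℂ S = {0} ∨
        0 < atTop.limsup fun n : ℕ => (∏ i ∈ Finset.range n, ω i) ^ ((n : ℝ)⁻¹))) :=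
  quasiNilpotentPart_dense_and_propertyQ_general S e ω hpos hS
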